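/- arXiv:2303.03623 — 2 statements merged into one kernel-verified Lean document; each statement's English description precedes it below -/
import Mathlib

section
/- Let r > 0 and let κ : ℝ → ℝ satisfy the regularity condition, with κ not identically zero. Then for every Q ∈ ℝ[X,Y]: Q(K(s,t), H(s,t)) = 0 for all s, t ∈ ℝ if and only if the polynomial r²·X − 2r·Y + 1 divides Q. -/
/-!
Along the tube $r^2 K - 2 r H + 1 = 0$, so every multiple of $r^2 X - 2 r Y + 1$ vanishes at $(K, H)$.
Conversely, restricting $Q$ to this line through the parametrisation $x \mapsto (x, (r^2 x + 1) / 2r)$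
gives a one-variable polynomial. If $\kappa(s_0) \neq 0$, then $K(s_0, t)$ is an injective Möbius
function of $\cos t$, so this polynomial has infinitely many roots and vanishes. Finally, substituting
$Y \mapsto -(a X + c)/b$ is the identity modulo $a X + b Y + c$, so a polynomial whose restriction
to that line vanishes is divisible by $a X + b Y + c$.
-/

open MvPolynomial

namespace MvPolynomial

variable {k : Type*} [Field k] (a b c : k)

noncomputable def lineParam : Fin 2 → Polynomial k :=
  ![Polynomial.X, -(Polynomial.C (a / b) * Polynomial.X + Polynomial.C (c / b))]

theorem eval_aeval_lineParam (x : k) (Q : MvPolynomial (Fin 2) k) :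
    (aeval (lineParam a b c) Q).eval x = eval ![x, -(a * x + c) / b] Q := by
  rw [← Polynomial.coe_aeval_eq_eval, comp_aeval_apply, aeval_eq_eval]
  congr
  funext i
  fin_cases i
  · simp [lineParam]
  · simp only [lineParam, Fin.mk_one, Matrix.cons_val_one, Matrix.cons_val_fin_one,
      Polynomial.coe_aeval_eq_eval, Polynomial.eval_neg, Polynomial.eval_add, Polynomial.eval_mul,
      Polynomial.eval_C, Polynomial.eval_X]
    ring

theorem sub_aeval_lineParam_mem_span (hb : b ≠ 0) (Q : MvPolynomial (Fin 2) k) :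
    Q - Polynomial.aeval (X 0) (aeval (lineParam a b c) Q) ∈
      Ideal.span {C a * X 0 + C b * X 1 + C c} := by
  set I := Ideal.span {(C a * X 0 + C b * X 1 + C c : MvPolynomial (Fin 2) k)}
  suffices h : (Ideal.Quotient.mkₐ k I).comp (AlgHom.id k _) =
      (Ideal.Quotient.mkₐ k I).comp ((Polynomial.aeval (X 0)).comp (aeval (lineParam a b c))) by
    rw [← Ideal.Quotient.eq]
    exact AlgHom.congr_fun h Q
  refine algHom_ext fun i => ?_
  fin_cases i
  · simp [lineParam]
  · simp only [AlgHom.comp_apply, AlgHom.id_apply, Ideal.Quotient.mkₐ_eq_mk]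
    rw [Ideal.Quotient.eq, Ideal.mem_span_singleton']
    refine ⟨C b⁻¹, ?_⟩
    have hinv : (C b⁻¹ * C b : MvPolynomial (Fin 2) k) = 1 := by
      rw [← C_mul, inv_mul_cancel₀ hb, C_1]
    simp only [lineParam, Fin.mk_one, Matrix.cons_val_one, Matrix.cons_val_fin_one, aeval_X,
      Polynomial.aeval_neg, Polynomial.aeval_C, Polynomial.aeval_X, algebraMap_eq, div_eq_inv_mul,
      map_mul, map_add]
    linear_combination X 1 * hinv

theorem dvd_of_infinite_zeros_on_line (hb : b ≠ 0) {S : Set k} (hS : S.Infinite)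
    {Q : MvPolynomial (Fin 2) k}
    (hQ : ∀ x ∈ S, ∃ y, a * x + b * y + c = 0 ∧ eval ![x, y] Q = 0) :
    C a * X 0 + C b * X 1 + C c ∣ Q := by
  have hrestrict : aeval (lineParam a b c) Q = 0 := by
    refine Polynomial.eq_zero_of_infinite_isRoot _ (hS.mono fun x hx => ?_)
    obtain ⟨y, hline, hy⟩ := hQ x hx
    have hy' : y = -(a * x + c) / b := by
      field_simp
      linear_combination hline
    rw [Set.mem_ofPred_eq, Polynomial.IsRoot.def, eval_aeval_lineParam, ← hy', hy]
  simpa [hrestrict] using Ideal.mem_span_singleton.mp (sub_aeval_lineParam_mem_span a b c hb Q)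

end MvPolynomial

theorem tube_curvatures_on_line {r k u : ℝ} (hr : r ≠ 0) (hd : r * k * u - 1 ≠ 0) :
    r ^ 2 * (k * u / (r * (r * k * u - 1)))
      - 2 * r * ((2 * r * k * u - 1) / (2 * r * (r * k * u - 1))) + 1 = 0 := by
  field_simp
  ring

theorem injOn_tube_gaussCurvature {r k : ℝ} (hr : r ≠ 0) (hk : k ≠ 0) :
    Set.InjOn (fun u => k * u / (r * (r * k * u - 1))) {u | r * k * u - 1 ≠ 0} := by
  intro u hu v hv h
  rw [div_eq_div_iff (mul_ne_zero hr hu) (mul_ne_zero hr hv)] at h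
  have h' : (k * r) * (u - v) = 0 := by linear_combination -h
  simpa [hk, hr, sub_eq_zero] using h'

theorem stmt_8 (r : ℝ) (hr : 0 < r) (κ : ℝ → ℝ)
    (hreg : ∀ s t : ℝ, 1 - r * κ s * Real.cos t ≠ 0)
    (hκ : ¬ ∀ s, κ s = 0) (Q : MvPolynomial (Fin 2) ℝ) :
    (∀ s t : ℝ,
        eval ![κ s * Real.cos t / (r * (r * κ s * Real.cos t - 1)),
          (2 * r * κ s * Real.cos t - 1) / (2 * r * (r * κ s * Real.cos t - 1))] Q = 0) ↔
      (C (r ^ 2) * X 0 - C (2 * r) * X 1 + 1) ∣ Q := by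
  have hd : ∀ s t, r * κ s * Real.cos t - 1 ≠ 0 := fun s t h => hreg s t (by linear_combination -h)
  constructor
  · intro hQ
    obtain ⟨s₀, hs₀⟩ := not_forall.mp hκ
    have hinj : Set.InjOn (fun t => κ s₀ * Real.cos t / (r * (r * κ s₀ * Real.cos t - 1)))
        (Set.Icc 0 Real.pi) :=
      (injOn_tube_gaussCurvature hr.ne' hs₀).comp Real.injOn_cos fun t _ => hd s₀ t
    have hdvd := dvd_of_infinite_zeros_on_line (r ^ 2) (-(2 * r)) 1 (by simp [hr.ne'])
      ((Set.Icc_infinite Real.pi_pos).image hinj) (Q := Q) <| by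
        rintro _ ⟨t, -, rfl⟩
        exact ⟨_, by linear_combination tube_curvatures_on_line hr.ne' (hd s₀ t), hQ s₀ t⟩
    simpa [sub_eq_add_neg] using hdvd
  · rintro ⟨R, rfl⟩ s t
    have hline := tube_curvatures_on_line hr.ne' (hd s t)
    simp [hline]
end

section
/- Let r > 0, fix signs ε, ε_B, δ ∈ {−1, 1}, let μ : ℝ → ℝ be one of the functions t ↦ δ·cos t, t ↦ δ·cosh t, t ↦ sinh t, and let κ : ℝ → ℝ satisfy the Lorentzian regularity condition, with κ not identically zero. Then for every Q ∈ ℝ[X,Y]: Q(K(s,t), H(s,t)) = 0 for all s, t ∈ ℝ if and only if the polynomial r²·X − 2r·Y + ε divides Q. -/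
/-!
On the surface the mean curvature is an affine function of the Gaussian curvature,
`H = (r / 2) K + ε / (2 r)`, so `(K, H)` lies on the line `r² X − 2 r Y + ε = 0`; this gives one
direction. Conversely, if `Q` vanishes at `(K, H)`, then restricting `Q` to that line gives a
one-variable polynomial vanishing at every value of `K`. Along a curve `s = s₀` with
`κ s₀ ≠ 0`, `K` is an injective Möbius function of `μ t`, and `μ` takes infinitely many values,
so this restriction is zero, i.e. the line divides `Q`.
-/

open MvPolynomial

section Line

variable {R : Type*} [CommRing R]

noncomputable def restrictToLine (a b : R) : MvPolynomial (Fin 2) R →ₐ[R] Polynomial R :=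
  aeval ![Polynomial.X, Polynomial.C a * Polynomial.X + Polynomial.C b]

theorem restrictToLine_eval (a b x : R) (q : MvPolynomial (Fin 2) R) :
    (restrictToLine a b q).eval x = eval ![x, a * x + b] q := by
  induction q using MvPolynomial.induction_on with
  | C c => simp [restrictToLine]
  | add p q hp hq => simp_all
  | mul_X p i hp =>
    fin_cases i <;> simp_all [restrictToLine]

theorem line_dvd_sub_aeval_restrictToLine (a b : R) (q : MvPolynomial (Fin 2) R) :
    X 1 - (C a * X 0 + C b) ∣ q - Polynomial.aeval (X 0) (restrictToLine a b q) := by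
  set I := Ideal.span {(X 1 - (C a * X 0 + C b) : MvPolynomial (Fin 2) R)}
  -- Modulo the line, substituting `a X + b` for `Y` changes nothing.
  have hmod : (Ideal.Quotient.mkₐ R I).comp
      ((Polynomial.aeval (X 0)).comp (restrictToLine a b)) = Ideal.Quotient.mkₐ R I := by
    refine algHom_ext fun i => ?_
    fin_cases i
    · simp [restrictToLine]
    · simpa [restrictToLine, algebraMap_eq] using
        (Ideal.Quotient.eq.mpr (Ideal.mem_span_singleton_self _) :
          Ideal.Quotient.mk I (X 1) = Ideal.Quotient.mk I (C a * X 0 + C b)).symm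
  rw [← Ideal.mem_span_singleton, ← Ideal.Quotient.eq]
  exact (DFunLike.congr_fun hmod q).symm

theorem line_dvd_of_infinite_zeros [IsDomain R] {a b : R} {q : MvPolynomial (Fin 2) R}
    (h : {x | eval ![x, a * x + b] q = 0}.Infinite) : X 1 - (C a * X 0 + C b) ∣ q := by
  have hzero : restrictToLine a b q = 0 :=
    Polynomial.eq_zero_of_infinite_isRoot _ <| by simpa [Polynomial.IsRoot, restrictToLine_eval]
  simpa [hzero] using line_dvd_sub_aeval_restrictToLine a b q

end Line

section Tube

variable {r ε εB k m : ℝ}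

noncomputable def tubeGaussCurvature (r ε εB k m : ℝ) : ℝ :=
  ε * εB * k * m / (r * (1 + εB * r * k * m))

noncomputable def tubeMeanCurvature (r ε εB k m : ℝ) : ℝ :=
  ε * (2 * εB * r * k * m + 1) / (2 * r * (1 + εB * r * k * m))

theorem tubeMeanCurvature_eq (hr : r ≠ 0) (h : 1 + εB * r * k * m ≠ 0) :
    tubeMeanCurvature r ε εB k m = r / 2 * tubeGaussCurvature r ε εB k m + ε / (2 * r) := by
  unfold tubeMeanCurvature tubeGaussCurvature
  field_simp
  ring

theorem tubeGaussCurvature_injOn (hr : r ≠ 0) (hε : ε ≠ 0) (hεB : εB ≠ 0) (hk : k ≠ 0) :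
    Set.InjOn (tubeGaussCurvature r ε εB k) {m | 1 + εB * r * k * m ≠ 0} := by
  intro m₁ h₁ m₂ h₂ heq
  rw [tubeGaussCurvature, tubeGaussCurvature,
    div_eq_div_iff (mul_ne_zero hr h₁) (mul_ne_zero hr h₂)] at heq
  have hprod : (ε * εB * k * r) * (m₁ - m₂) = 0 := by linear_combination heq
  exact sub_eq_zero.mp ((mul_eq_zero.mp hprod).resolve_left (by positivity))

theorem tube_line_eq_C_mul (hr : r ≠ 0) :
    (C (r ^ 2) * X 0 - C (2 * r) * X 1 + C ε : MvPolynomial (Fin 2) ℝ) =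
      C (-(2 * r)) * (X 1 - (C (r / 2) * X 0 + C (ε / (2 * r)))) := by
  have hX0 : (C (r ^ 2) : MvPolynomial (Fin 2) ℝ) = -(C (-(2 * r)) * C (r / 2)) := by
    rw [← C_mul, ← C_neg]; congr 1; ring
  have hconst : (C ε : MvPolynomial (Fin 2) ℝ) = -(C (-(2 * r)) * C (ε / (2 * r))) := by
    rw [← C_mul, ← C_neg]; congr 1; field_simp
  rw [hX0, hconst, C_neg]
  ring

end Tube

theorem infinite_range_of_cos_cosh_sinh {δ : ℝ} {μ : ℝ → ℝ} (hδ : δ ≠ 0)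
    (hμ : (∀ t, μ t = δ * Real.cos t) ∨ (∀ t, μ t = δ * Real.cosh t) ∨
      (∀ t, μ t = Real.sinh t)) :
    (Set.range μ).Infinite := by
  suffices ∃ T : Set ℝ, T.Infinite ∧ Set.InjOn μ T by
    obtain ⟨T, hT, hinj⟩ := this
    exact (hT.image hinj).mono (Set.image_subset_range μ T)
  rcases hμ with h | h | h <;> simp only [funext h]
  · exact ⟨Set.Icc 0 Real.pi, Set.Icc_infinite Real.pi_pos,
      fun a ha b hb hab => Real.injOn_cos ha hb (mul_left_cancel₀ hδ hab)⟩
  · exact ⟨Set.Ici 0, Set.Ici_infinite 0,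
      fun a ha b hb hab => Real.cosh_strictMonoOn.injOn ha hb (mul_left_cancel₀ hδ hab)⟩
  · exact ⟨Set.univ, Set.infinite_univ, Real.sinh_injective.injOn⟩

theorem stmt_17 (r : ℝ) (hr : 0 < r)
    (ε εB δ : ℝ) (hε : ε = -1 ∨ ε = 1) (hεB : εB = -1 ∨ εB = 1) (hδ : δ = -1 ∨ δ = 1)
    (μ : ℝ → ℝ)
    (hμ : (∀ t, μ t = δ * Real.cos t) ∨ (∀ t, μ t = δ * Real.cosh t) ∨
      (∀ t, μ t = Real.sinh t))
    (κ : ℝ → ℝ) (hreg : ∀ s t : ℝ, 1 + εB * r * κ s * μ t ≠ 0)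
    (hκ : ¬ ∀ s, κ s = 0) (Q : MvPolynomial (Fin 2) ℝ) :
    (∀ s t : ℝ,
        eval ![ε * εB * κ s * μ t / (r * (1 + εB * r * κ s * μ t)),
          ε * (2 * εB * r * κ s * μ t + 1) / (2 * r * (1 + εB * r * κ s * μ t))] Q = 0) ↔
      (C (r ^ 2) * X 0 - C (2 * r) * X 1 + C ε) ∣ Q := by
  have hr0 : r ≠ 0 := hr.ne'
  have hunit : IsUnit (C (-(2 * r)) : MvPolynomial (Fin 2) ℝ) :=
    (isUnit_iff_ne_zero.mpr (by simpa using hr0)).map C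
  rw [tube_line_eq_C_mul hr0, hunit.mul_left_dvd]
  change (∀ s t, eval ![tubeGaussCurvature r ε εB (κ s) (μ t),
    tubeMeanCurvature r ε εB (κ s) (μ t)] Q = 0) ↔ _
  constructor
  · intro hvan
    obtain ⟨s₀, hs₀⟩ : ∃ s, κ s ≠ 0 := not_forall.mp hκ
    have hinj : Set.InjOn (tubeGaussCurvature r ε εB (κ s₀)) (Set.range μ) :=
      (tubeGaussCurvature_injOn hr0 (by rcases hε with rfl | rfl <;> norm_num)
        (by rcases hεB with rfl | rfl <;> norm_num) hs₀).mono
        (Set.range_subset_iff.mpr (hreg s₀))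
    refine line_dvd_of_infinite_zeros <| Set.Infinite.mono ?_
      ((infinite_range_of_cos_cosh_sinh (by rcases hδ with rfl | rfl <;> norm_num) hμ).image hinj)
    rintro _ ⟨_, ⟨t, rfl⟩, rfl⟩
    simpa [← tubeMeanCurvature_eq hr0 (hreg s₀ t)] using hvan s₀ t
  · rintro ⟨R, rfl⟩ s t
    simp [tubeMeanCurvature_eq hr0 (hreg s t)]
end
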